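/- arXiv:2105.06248 — 3 statements merged into one kernel-verified Lean document; each statement's English description precedes it below -/
import Mathlib

section
/- Let L₁,…,L₆ be six pairwise distinct lines in P² (zero sets of pairwise non-proportional nonzero linear forms) such that no three of the lines pass through a common point, and such that any line distinct from L₁,…,L₆ contains at most 3 of the pairwise intersection points of the six lines. Let S be the set of the 15 pairwise intersection points Lᵢ ∩ Lⱼ (1 ≤ i < j ≤ 6). Then S cannot be contained in the union of a cubic curve and two points: for every nonzero homogeneous cubic polynomial F and all points p, q ∈ P², the set S is not contained in {x ∈ P² : F(x) = 0} ∪ {p, q}. -/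
/-!
Suppose the fifteen points lie on the cubic `F = 0` apart from `p` and `q`. No three lines are
concurrent, so at most two of them pass through `p` and at least four miss it. Such a line meets
the other five in five distinct points, at most one of which is `q`; so `F` vanishes at four points
of it and, being a cubic, on the whole line. But a cubic vanishing on four distinct lines is zero:
a generic line through any point meets them in four distinct points.
-/

open MvPolynomial Module
open scoped LinearAlgebra.Projectivization

section LinearAlgebra

variable {K V : Type*} [Field K] [AddCommGroup V] [Module K V]

theorem Submodule.exists_eq_span_pair_of_finrank_eq_two {W : Submodule K V}
    (hW : finrank K W = 2) : ∃ u w : V, W = span K {u, w} := by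
  have : FiniteDimensional K W := Module.finite_of_finrank_eq_succ hW
  let b := Module.finBasisOfFinrankEq K W hW
  refine ⟨b 0, b 1, ?_⟩
  have hrange : Set.range b = {b 0, b 1} := by
    ext; simp [Fin.exists_fin_two, eq_comm]
  rw [← Set.image_pair, ← hrange]
  conv_lhs => rw [← W.map_subtype_top, ← b.span_eq, Submodule.map_span]
  rfl

theorem Projectivization.exists_dual_apply_rep_eq_zero [FiniteDimensional K V]
    (hV : 2 < finrank K V) (f g : Dual K V) : ∃ x : ℙ K V, f x.rep = 0 ∧ g x.rep = 0 := by
  obtain ⟨v, hv, hv0⟩ := (Submodule.ne_bot_iff _).mp <|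
    LinearMap.ker_ne_bot_of_finrank_lt (f := f.prod g) (by simpa using hV)
  obtain ⟨hfv, hgv⟩ : f v = 0 ∧ g v = 0 := by simpa using hv
  obtain ⟨a, ha⟩ := Projectivization.exists_smul_eq_mk_rep K v hv0
  exact ⟨Projectivization.mk K v hv0, by rw [← ha, Units.smul_def, map_smul, hfv, smul_zero],
    by rw [← ha, Units.smul_def, map_smul, hgv, smul_zero]⟩

/-- In the chart `z ↦ w + z • (u + c • w)` of the line spanned by `u` and `w`, the point
`a • u + b • w` has coordinate `a / (b - c * a)`; the chart misses only `u + c • w` itself. -/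
theorem smul_add_smul_eq_chart {V : Type*} [AddCommGroup V] [Module K V] {a b c : K}
    (h : b - c * a ≠ 0 ∨ a = 0) (u w : V) :
    a • u + b • w = (b - c * a) • (w + (a / (b - c * a)) • (u + c • w)) := by
  rcases h with h | rfl
  · rw [smul_add, smul_smul, mul_div_cancel₀ _ h]
    module
  · simp

end LinearAlgebra

namespace MvPolynomial

variable {K σ : Type*} [Field K]

theorem natDegree_aeval_le_totalDegree {g : σ → Polynomial K} (hg : ∀ i, (g i).natDegree ≤ 1)
    (F : MvPolynomial σ K) : (aeval g F).natDegree ≤ F.totalDegree := by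
  conv_lhs => rw [F.as_sum, map_sum]
  refine Polynomial.natDegree_sum_le_of_forall_le _ _ fun d hd => ?_
  rw [aeval_monomial, ← Polynomial.C_eq_algebraMap]
  refine (Polynomial.natDegree_C_mul_le _ _).trans <| (Polynomial.natDegree_prod_le _ _).trans ?_
  calc ∑ i ∈ d.support, (g i ^ d i).natDegree
      ≤ ∑ i ∈ d.support, d i :=
        Finset.sum_le_sum fun i _ => Polynomial.natDegree_pow_le_of_le _ (hg i) |>.trans (by simp)
    _ ≤ F.totalDegree := le_totalDegree hd

theorem eval_add_smul_eq_zero_of_totalDegree_lt_card {F : MvPolynomial σ K} {n : ℕ}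
    (hF : F.totalDegree ≤ n) (u w : σ → K) {ι : Type*} [Fintype ι]
    (hcard : n < Fintype.card ι) {z : ι → K} (hz : Function.Injective z)
    (hroot : ∀ k, eval (u + z k • w) F = 0) (t : K) :
    eval (u + t • w) F = 0 := by
  set g : σ → Polynomial K := fun i => Polynomial.C (w i) * Polynomial.X + Polynomial.C (u i)
  have heval : ∀ t, (aeval g F).eval t = eval (u + t • w) F := fun t => by
    rw [aeval_def, polynomial_eval_eval₂]
    congr 1
    · ext; simp
    · ext i
      simp only [g, Polynomial.eval_add, Polynomial.eval_mul, Polynomial.eval_C, Polynomial.eval_X,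
        Pi.add_apply, Pi.smul_apply, smul_eq_mul]
      ring
  have hzero : aeval g F = 0 :=
    Polynomial.eq_zero_of_natDegree_lt_card_of_eval_eq_zero _ hz (fun k => by rw [heval, hroot])
      ((natDegree_aeval_le_totalDegree (fun _ => Polynomial.natDegree_linear_le) F).trans hF
        |>.trans_lt hcard)
  rw [← heval, hzero, Polynomial.eval_zero]

theorem exists_forall_eval_ne_zero [Infinite K] (s : Finset (MvPolynomial σ K)) (hs : 0 ∉ s) :
    ∃ w : σ → K, ∀ g ∈ s, eval w g ≠ 0 := by
  have hprod : ∏ g ∈ s, g ≠ 0 := Finset.prod_ne_zero_iff.mpr fun g hg h => hs (h ▸ hg)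
  obtain ⟨w, hw⟩ : ∃ w, eval w (∏ g ∈ s, g) ≠ 0 := by
    by_contra! h
    exact hprod (MvPolynomial.funext fun w => by simp [h w])
  exact ⟨w, fun g hg => by
    rw [map_prod] at hw
    exact Finset.prod_ne_zero_iff.mp hw g hg⟩

section Fintype

variable [Fintype σ]

theorem IsHomogeneous.eval_smul {F : MvPolynomial σ K} {n : ℕ} (hF : F.IsHomogeneous n)
    (c : K) (v : σ → K) : eval (c • v) F = c ^ n * eval v F := by
  simp only [eval_eq', Finset.mul_sum]
  refine Finset.sum_congr rfl fun d hd => ?_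
  have hdeg : ∑ i, d i = n := by
    simpa [Finsupp.weight_apply, Finsupp.sum_fintype] using hF (mem_support_iff.mp hd)
  simp only [Pi.smul_apply, smul_eq_mul, mul_pow, Finset.prod_mul_distrib,
    Finset.prod_pow_eq_pow_sum, hdeg]
  ring

theorem IsHomogeneous.exists_dual_eq_eval {ℓ : MvPolynomial σ K} (hℓ : ℓ.IsHomogeneous 1) :
    ∃ f : Dual K (σ → K), ∀ v, f v = eval v ℓ := by
  have hmem : ℓ ∈ Submodule.span K (Set.range (X : σ → MvPolynomial σ K)) := by
    rw [← homogeneousSubmodule_one_eq_span_X]; exact hℓ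
  obtain ⟨c, rfl⟩ := (Submodule.mem_span_range_iff_exists_fun K).mp hmem
  exact ⟨Fintype.linearCombination K c, fun v => by
    simp [Fintype.linearCombination_apply, smul_eval, mul_comm]⟩

theorem IsHomogeneous.eval_add_smul {ℓ : MvPolynomial σ K} (hℓ : ℓ.IsHomogeneous 1)
    (u w : σ → K) (t : K) : eval (u + t • w) ℓ = eval u ℓ + t * eval w ℓ := by
  obtain ⟨f, hf⟩ := hℓ.exists_dual_eq_eval
  simp [← hf]

theorem eq_zero_of_vanishes_on_hyperplanes [Infinite K] {F : MvPolynomial σ K} {n : ℕ}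
    (hF : F.totalDegree ≤ n) {ι : Type*} [Fintype ι] (hcard : n < Fintype.card ι)
    {m : ι → MvPolynomial σ K} (hm : ∀ k, (m k).IsHomogeneous 1) (hm0 : ∀ k, m k ≠ 0)
    (hdist : Pairwise fun k l => ∀ c : K, m k ≠ c • m l)
    (hvan : ∀ k v, eval v (m k) = 0 → eval v F = 0) : F = 0 := by
  classical
  refine MvPolynomial.funext fun v => ?_
  rw [map_zero]
  by_cases hv : ∃ k, eval v (m k) = 0
  · obtain ⟨k, hk⟩ := hv
    exact hvan k v hk
  push Not at hv
  -- The line `z ↦ v + z • w` meets the hyperplane `m k = 0` at `z k`; choosing `w` off the zero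
  -- sets of the `m k` and of the `D (k, l)` makes these points exist and be pairwise distinct.
  set D : ι × ι → MvPolynomial σ K :=
    fun kl => C (eval v (m kl.1)) * m kl.2 - C (eval v (m kl.2)) * m kl.1
  have hD : ∀ k l, k ≠ l → D (k, l) ≠ 0 := by
    intro k l hkl hD0
    refine hdist hkl.symm (eval v (m l) / eval v (m k))
      (mul_left_cancel₀ (C_ne_zero.mpr (hv k)) ?_)
    rw [smul_eq_C_mul, ← mul_assoc, ← C_mul, mul_div_cancel₀ _ (hv k)]
    exact sub_eq_zero.mp hD0
  obtain ⟨w, hw⟩ := exists_forall_eval_ne_zero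
    (Finset.univ.image m ∪ Finset.univ.offDiag.image D) (by simpa [hm0] using hD)
  have hwm : ∀ k, eval w (m k) ≠ 0 := fun k => hw _ (by simp)
  have hwD : ∀ k l, k ≠ l → eval v (m k) * eval w (m l) ≠ eval v (m l) * eval w (m k) := by
    intro k l hkl h
    refine hw (D (k, l)) (by simpa using Or.inr ⟨k, l, hkl, rfl⟩) ?_
    simp [D, h]
  set z : ι → K := fun k => -eval v (m k) / eval w (m k)
  have hz : Function.Injective z := by
    intro k l hkl
    by_contra hne
    apply hwD k l hne
    have := (div_eq_div_iff (hwm k) (hwm l)).mp hkl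
    linear_combination -this
  have hroot : ∀ k, eval (v + z k • w) F = 0 := fun k => hvan k _ <| by
    rw [(hm k).eval_add_smul, div_mul_cancel₀ _ (hwm k)]
    ring
  simpa using eval_add_smul_eq_zero_of_totalDegree_lt_card hF v w hcard hz hroot 0

theorem IsHomogeneous.eval_eq_zero_of_mem_span_pair [Infinite K] {F : MvPolynomial σ K} {n : ℕ}
    (hF : F.IsHomogeneous n) {u w : σ → K} {ι : Type*} [Fintype ι]
    (hcard : n < Fintype.card ι) {x : ι → ℙ K (σ → K)} (hx : Function.Injective x)
    (hxW : ∀ k, (x k).rep ∈ Submodule.span K {u, w}) (hxF : ∀ k, eval (x k).rep F = 0)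
    {v : σ → K} (hv : v ∈ Submodule.span K {u, w}) : eval v F = 0 := by
  classical
  choose a b hab using fun k => Submodule.mem_span_pair.mp (hxW k)
  obtain ⟨s, t, rfl⟩ := Submodule.mem_span_pair.mp hv
  -- `c` is chosen so that neither `v` nor any `x k` is the point `u + c • w` missed by the chart.
  obtain ⟨c, hc⟩ :=
    Infinite.exists_notMem_finset (insert (t / s) (Finset.univ.image fun k => b k / a k))
  have hchart : ∀ {a b : K}, c ≠ b / a → b - c * a ≠ 0 ∨ a = 0 := by
    intro a b hcab
    refine or_iff_not_imp_right.mpr fun ha h => hcab ?_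
    rw [eq_div_iff ha]
    linear_combination -h
  set y := u + c • w
  set β := fun k => b k - c * a k
  have hβ : ∀ k, β k ≠ 0 := by
    intro k hk
    rcases hchart (a := a k) (b := b k) (fun h => hc (by simp [h])) with h | h
    · exact h hk
    · apply (x k).rep_nonzero
      simp [← hab k, h, show b k = 0 by simpa [β, h] using hk]
  set z := fun k => a k / β k
  have hrep : ∀ k, (x k).rep = β k • (w + z k • y) := fun k =>
    (hab k).symm.trans (smul_add_smul_eq_chart (Or.inl (hβ k)) u w)
  have hz : Function.Injective z := by
    intro k l hkl
    apply hx
    rw [← Projectivization.mk_rep (x k), ← Projectivization.mk_rep (x l),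
      Projectivization.mk_eq_mk_iff']
    refine ⟨β k / β l, ?_⟩
    rw [hrep k, hrep l, smul_smul, div_mul_cancel₀ _ (hβ l), hkl]
  have hroot : ∀ k, eval (w + z k • y) F = 0 := fun k => by
    have := hxF k
    rw [hrep k, hF.eval_smul] at this
    exact (mul_eq_zero.mp this).resolve_left (pow_ne_zero _ (hβ k))
  rw [smul_add_smul_eq_chart (hchart fun h => hc (by simp [h])) u w, hF.eval_smul,
    eval_add_smul_eq_zero_of_totalDegree_lt_card hF.totalDegree_le w y hcard hz hroot, mul_zero]

end Fintype

section ProjectivePlane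

variable {K : Type*} [Field K]

theorem IsHomogeneous.exists_common_zero {ℓ m : MvPolynomial (Fin 3) K}
    (hℓ : ℓ.IsHomogeneous 1) (hm : m.IsHomogeneous 1) :
    ∃ x : ℙ K (Fin 3 → K), eval x.rep ℓ = 0 ∧ eval x.rep m = 0 := by
  obtain ⟨f, hf⟩ := hℓ.exists_dual_eq_eval
  obtain ⟨g, hg⟩ := hm.exists_dual_eq_eval
  simpa only [hf, hg] using Projectivization.exists_dual_apply_rep_eq_zero (by simp) f g

theorem IsHomogeneous.exists_eval_eq_zero_iff_mem_span_pair [Infinite K]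
    {ℓ : MvPolynomial (Fin 3) K} (hℓ : ℓ.IsHomogeneous 1) (h0 : ℓ ≠ 0) :
    ∃ u w : Fin 3 → K, ∀ v, eval v ℓ = 0 ↔ v ∈ Submodule.span K {u, w} := by
  obtain ⟨f, hf⟩ := hℓ.exists_dual_eq_eval
  have hf0 : f ≠ 0 := fun h => h0 (MvPolynomial.funext fun v => by simp [← hf, h])
  have hker : finrank K (LinearMap.ker f) = 2 := by
    have := Dual.finrank_ker_add_one_of_ne_zero hf0
    simp only [finrank_fin_fun] at this
    omega
  obtain ⟨u, w, huw⟩ := Submodule.exists_eq_span_pair_of_finrank_eq_two hker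
  exact ⟨u, w, fun v => by rw [← huw, LinearMap.mem_ker, hf]⟩

def NoThreeConcurrent {ι : Type*} (ℓ : ι → MvPolynomial (Fin 3) K) : Prop :=
  ∀ i j k, i ≠ j → j ≠ k → i ≠ k → ¬ ∃ p : ℙ K (Fin 3 → K),
    eval p.rep (ℓ i) = 0 ∧ eval p.rep (ℓ j) = 0 ∧ eval p.rep (ℓ k) = 0

variable {ι : Type*} {ℓ : ι → MvPolynomial (Fin 3) K}

theorem NoThreeConcurrent.card_le_two (hℓ : NoThreeConcurrent ℓ) (x : ℙ K (Fin 3 → K))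
    {s : Finset ι} (hs : ∀ i ∈ s, eval x.rep (ℓ i) = 0) : s.card ≤ 2 := by
  by_contra! h
  obtain ⟨i, hi, j, hj, k, hk, hij, hik, hjk⟩ := Finset.two_lt_card.mp h
  exact hℓ i j k hij hjk hik ⟨x, hs i hi, hs j hj, hs k hk⟩

theorem IsHomogeneous.eval_eq_zero_of_vanishes_at_intersections [Infinite K] [Fintype ι]
    (hℓ : ∀ i, (ℓ i).IsHomogeneous 1) (hconc : NoThreeConcurrent ℓ)
    {F : MvPolynomial (Fin 3) K} {n : ℕ} (hF : F.IsHomogeneous n)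
    (hcard : n + 2 < Fintype.card ι)
    {i : ι} (hi : ℓ i ≠ 0) (q : ℙ K (Fin 3 → K))
    (hvan : ∀ j ≠ i, ∀ x : ℙ K (Fin 3 → K),
      eval x.rep (ℓ i) = 0 → eval x.rep (ℓ j) = 0 → x ≠ q → eval x.rep F = 0)
    {v : Fin 3 → K} (hv : eval v (ℓ i) = 0) : eval v F = 0 := by
  classical
  choose P hP using fun j => (hℓ i).exists_common_zero (hℓ j)
  have hPinj : Set.InjOn P (Finset.univ.erase i) := by
    intro j hj j' hj' hjj'
    by_contra hne
    exact hconc i j j' (Finset.ne_of_mem_erase hj).symm hne (Finset.ne_of_mem_erase hj').symm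
      ⟨P j, (hP j).1, (hP j).2, hjj' ▸ (hP j').2⟩
  have hq : ((Finset.univ.erase i).filter (P · = q)).card ≤ 1 :=
    Finset.card_le_one.mpr fun j hj j' hj' =>
      hPinj (Finset.mem_of_mem_filter j hj) (Finset.mem_of_mem_filter j' hj')
        ((Finset.mem_filter.mp hj).2.trans (Finset.mem_filter.mp hj').2.symm)
  have hsplit := Finset.card_filter_add_card_filter_not (s := Finset.univ.erase i) (P · = q)
  rw [Finset.card_erase_of_mem (Finset.mem_univ i), Finset.card_univ] at hsplit
  set J := (Finset.univ.erase i).filter fun j => ¬P j = q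
  have hJ : n < J.card := by omega
  obtain ⟨u, w, huw⟩ := (hℓ i).exists_eval_eq_zero_iff_mem_span_pair hi
  refine hF.eval_eq_zero_of_mem_span_pair (ι := J) (x := fun j => P j) (by simpa using hJ) ?_
    (fun j => (huw _).mp (hP j).1) (fun j => ?_) ((huw v).mp hv)
  · intro j j' hjj'
    exact Subtype.ext <|
      hPinj (Finset.mem_of_mem_filter _ j.2) (Finset.mem_of_mem_filter _ j'.2) hjj'
  · obtain ⟨hji, hjq⟩ := Finset.mem_filter.mp j.2
    exact hvan j (Finset.ne_of_mem_erase hji) _ (hP j).1 (hP j).2 hjq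

end ProjectivePlane

end MvPolynomial

theorem intersection_points_of_six_generic_lines_not_in_cubic_union_two_points_general
    (ℓ : Fin 6 → MvPolynomial (Fin 3) ℂ)
    (hh : ∀ i, (ℓ i).IsHomogeneous 1) (hne : ∀ i, ℓ i ≠ 0)
    (hdist : ∀ i j : Fin 6, i ≠ j → ∀ c : ℂ, ℓ i ≠ c • ℓ j)
    (hnoconc : ∀ i j k : Fin 6, i ≠ j → j ≠ k → i ≠ k →
      ¬ ∃ p : Projectivization ℂ (Fin 3 → ℂ),
        eval p.rep (ℓ i) = 0 ∧ eval p.rep (ℓ j) = 0 ∧ eval p.rep (ℓ k) = 0)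
    (S : Set (Projectivization ℂ (Fin 3 → ℂ)))
    (hS : S = {p | ∃ i j : Fin 6, i ≠ j ∧
      eval p.rep (ℓ i) = 0 ∧ eval p.rep (ℓ j) = 0})
    (F : MvPolynomial (Fin 3) ℂ) (hF : F ≠ 0) (hFh : F.IsHomogeneous 3)
    (p q : Projectivization ℂ (Fin 3 → ℂ)) :
    ¬ S ⊆ {y : Projectivization ℂ (Fin 3 → ℂ) | eval y.rep F = 0} ∪ {p, q} := by
  classical
  subst hS
  intro hsub
  have hvan : ∀ i, eval p.rep (ℓ i) ≠ 0 → ∀ j ≠ i, ∀ x : ℙ ℂ (Fin 3 → ℂ),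
      eval x.rep (ℓ i) = 0 → eval x.rep (ℓ j) = 0 → x ≠ q → eval x.rep F = 0 := by
    intro i hpi j hji x hxi hxj hxq
    rcases hsub ⟨i, j, hji.symm, hxi, hxj⟩ with hxF | rfl | rfl
    exacts [hxF, absurd hxi hpi, absurd rfl hxq]
  have hcard : 3 < Fintype.card {i // eval p.rep (ℓ i) ≠ 0} := by
    have hthrough := NoThreeConcurrent.card_le_two hnoconc p
      (s := Finset.univ.filter fun i => eval p.rep (ℓ i) = 0) (by simp)
    have hsplit := Finset.card_filter_add_card_filter_not (s := Finset.univ)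
      fun i => eval p.rep (ℓ i) = 0
    rw [Finset.card_univ, Fintype.card_fin] at hsplit
    simp only [Fintype.card_subtype, ne_eq]
    omega
  exact hF <| eq_zero_of_vanishes_on_hyperplanes hFh.totalDegree_le hcard (fun i => hh i)
    (fun i => hne i) (fun i j hij c => hdist i j (Subtype.coe_ne_coe.mpr hij) c) fun i v hv =>
      hFh.eval_eq_zero_of_vanishes_at_intersections hh hnoconc (by simp) (hne i) q (hvan i i.2) hv

theorem intersection_points_of_six_generic_lines_not_in_cubic_union_two_points
    (ℓ : Fin 6 → MvPolynomial (Fin 3) ℂ)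
    (hh : ∀ i, (ℓ i).IsHomogeneous 1) (hne : ∀ i, ℓ i ≠ 0)
    (hdist : ∀ i j : Fin 6, i ≠ j → ∀ c : ℂ, ℓ i ≠ c • ℓ j)
    (hnoconc : ∀ i j k : Fin 6, i ≠ j → j ≠ k → i ≠ k →
      ¬ ∃ p : Projectivization ℂ (Fin 3 → ℂ),
        eval p.rep (ℓ i) = 0 ∧ eval p.rep (ℓ j) = 0 ∧ eval p.rep (ℓ k) = 0)
    (S : Set (Projectivization ℂ (Fin 3 → ℂ)))
    (hS : S = {p | ∃ i j : Fin 6, i ≠ j ∧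
      eval p.rep (ℓ i) = 0 ∧ eval p.rep (ℓ j) = 0})
    (hline : ∀ m : MvPolynomial (Fin 3) ℂ, m ≠ 0 → m.IsHomogeneous 1 →
      (∀ i : Fin 6, ∀ c : ℂ, m ≠ c • ℓ i) →
      {p ∈ S | eval p.rep m = 0}.ncard ≤ 3)
    (F : MvPolynomial (Fin 3) ℂ) (hF : F ≠ 0) (hFh : F.IsHomogeneous 3)
    (p q : Projectivization ℂ (Fin 3 → ℂ)) :
    ¬ S ⊆ {y : Projectivization ℂ (Fin 3 → ℂ) | eval y.rep F = 0} ∪ {p, q} :=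
  intersection_points_of_six_generic_lines_not_in_cubic_union_two_points_general ℓ hh hne hdist
    hnoconc S hS F hF hFh p q
end

section
/- Let S = {x₁,…,x₁₂} be twelve distinct points of P² such that no (possibly reducible) cubic curve contains 10 or more points of S. Suppose C is an irreducible homogeneous polynomial of degree 2 whose zero set contains exactly the points x₁,…,x₇ among the points of S. Then every nonzero homogeneous polynomial of degree 2 vanishing at all of the five remaining points x₈,…,x₁₂ is irreducible in ℂ[X,Y,Z]. -/
/-!
If `D` were reducible, it would be a product of two linear forms, because the factors of a
homogeneous polynomial are homogeneous. By pigeonhole one of the two lines passes through three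
of the five points `x₈, …, x₁₂`, and that line together with the conic `C` is a cubic through
`7 + 3 = 10` points of `S`.
-/

namespace MvPolynomial

variable {σ R : Type*}

section CommSemiring

variable [CommSemiring R] {p q : MvPolynomial σ R}

theorem degree_le_totalDegree {d : σ →₀ ℕ} (hd : d ∈ p.support) : d.degree ≤ p.totalDegree :=
  le_totalDegree hd

theorem homogeneousComponent_ne_zero {d : σ →₀ ℕ} (hd : d ∈ p.support) :
    homogeneousComponent d.degree p ≠ 0 := by
  intro h
  have : coeff d (homogeneousComponent d.degree p) = coeff d p := by
    simp [coeff_homogeneousComponent]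
  rw [h, coeff_zero] at this
  exact mem_support_iff.mp hd this.symm

theorem homogeneousComponent_add_mul_of_le_degree {k l : ℕ}
    (hp : ∀ d ∈ p.support, k ≤ d.degree) (hq : ∀ d ∈ q.support, l ≤ d.degree) :
    homogeneousComponent (k + l) (p * q) =
      homogeneousComponent k p * homogeneousComponent l q := by
  classical
  ext d
  rw [coeff_homogeneousComponent]
  split_ifs with hd
  · rw [coeff_mul, coeff_mul]
    refine Finset.sum_congr rfl ?_
    rintro ⟨u, v⟩ huv
    dsimp only
    have hdeg : u.degree + v.degree = k + l := by
      rw [← map_add, Finset.HasAntidiagonal.mem_antidiagonal.mp huv, hd]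
    rw [coeff_homogeneousComponent, coeff_homogeneousComponent]
    by_cases hu : coeff u p = 0
    · simp [hu]
    by_cases hv : coeff v q = 0
    · simp [hv]
    have := hp u (mem_support_iff.mpr hu)
    have := hq v (mem_support_iff.mpr hv)
    rw [if_pos (by omega), if_pos (by omega)]
  · exact (((homogeneousComponent_isHomogeneous k p).mul
      (homogeneousComponent_isHomogeneous l q)).coeff_eq_zero hd).symm

theorem IsHomogeneous.of_mul_left [NoZeroDivisors R] {n : ℕ} (h : (p * q).IsHomogeneous n)
    (hq : q ≠ 0) : p.IsHomogeneous p.totalDegree := by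
  classical
  rcases eq_or_ne p 0 with rfl | hp
  · exact isHomogeneous_zero _ _ _
  obtain ⟨d₀, hd₀, hd₀_min⟩ := p.support.exists_min_image Finsupp.degree (support_nonempty.mpr hp)
  obtain ⟨e₀, he₀, he₀_min⟩ := q.support.exists_min_image Finsupp.degree (support_nonempty.mpr hq)
  -- The lowest homogeneous parts of `p` and `q` multiply to a nonzero part of `p * q`, and so do
  -- the highest ones; both parts must sit in degree `n`, which pins the degrees of `p` down.
  have hlow : d₀.degree + e₀.degree = n := by
    by_contra hne
    apply mul_ne_zero (homogeneousComponent_ne_zero hd₀) (homogeneousComponent_ne_zero he₀)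
    rw [← homogeneousComponent_add_mul_of_le_degree hd₀_min he₀_min]
    simp [homogeneousComponent_of_mem h, hne]
  have htop : p.totalDegree + q.totalDegree = n := by
    rw [← totalDegree_mul_of_isDomain hp hq, h.totalDegree (mul_ne_zero hp hq)]
  have := degree_le_totalDegree hd₀
  have := degree_le_totalDegree he₀
  intro d hd
  have := hd₀_min d (mem_support_iff.mpr hd)
  have := degree_le_totalDegree (mem_support_iff.mpr hd)
  rw [Pi.one_def, ← Finsupp.degree_eq_weight_one]
  omega

end CommSemiring

section Field

variable {K : Type*} [Field K] {p : MvPolynomial σ K}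

theorem isUnit_of_totalDegree_eq_zero (hp : p ≠ 0) (h : p.totalDegree = 0) : IsUnit p := by
  rw [totalDegree_eq_zero_iff_eq_C] at h
  rw [h] at hp ⊢
  exact (isUnit_iff_ne_zero.mpr (by simpa using hp)).map C

theorem exists_linear_factors_of_not_irreducible (hp : p ≠ 0) (h2 : p.IsHomogeneous 2)
    (hirr : ¬ Irreducible p) :
    ∃ a b, p = a * b ∧ a ≠ 0 ∧ b ≠ 0 ∧ a.IsHomogeneous 1 ∧ b.IsHomogeneous 1 := by
  have hunit : ¬ IsUnit p := fun hu => by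
    simpa [h2.totalDegree hp] using (isUnit_iff_totalDegree_of_isReduced.mp hu).2
  rw [irreducible_iff] at hirr
  push Not at hirr
  obtain ⟨a, b, rfl, ha, hb⟩ := hirr hunit
  have ha0 : a ≠ 0 := left_ne_zero_of_mul hp
  have hb0 : b ≠ 0 := right_ne_zero_of_mul hp
  have hdeg : a.totalDegree + b.totalDegree = 2 := by
    rw [← totalDegree_mul_of_isDomain ha0 hb0, h2.totalDegree hp]
  have ha_pos : a.totalDegree ≠ 0 := fun h => ha (isUnit_of_totalDegree_eq_zero ha0 h)
  have hb_pos : b.totalDegree ≠ 0 := fun h => hb (isUnit_of_totalDegree_eq_zero hb0 h)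
  obtain ⟨ha1, hb1⟩ : a.totalDegree = 1 ∧ b.totalDegree = 1 := by omega
  refine ⟨a, b, rfl, ha0, hb0, ha1 ▸ h2.of_mul_left hb0, hb1 ▸ ?_⟩
  exact (mul_comm a b ▸ h2).of_mul_left ha0

end Field

end MvPolynomial

open Finset MvPolynomial

theorem Finset.card_le_ncard_sep_range {ι α : Type*} [Finite ι] {x : ι → α}
    (hx : Function.Injective x) {Z : α → Prop} {s : Finset ι} (hs : ∀ i ∈ s, Z (x i)) :
    #s ≤ {y ∈ Set.range x | Z y}.ncard :=
  calc #s = (x '' s).ncard := by rw [Set.ncard_image_of_injective _ hx, Set.ncard_coe_finset]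
    _ ≤ _ := Set.ncard_le_ncard (by rintro _ ⟨i, hi, rfl⟩; exact ⟨⟨i, rfl⟩, hs i hi⟩)
      ((Set.finite_range x).subset fun _ hy => hy.1)

theorem card_vanishing_on_last_five_le_two {x : Fin 12 → Projectivization ℂ (Fin 3 → ℂ)}
    (hx : Function.Injective x)
    (hcubic : ∀ F : MvPolynomial (Fin 3) ℂ, F ≠ 0 → F.IsHomogeneous 3 →
      {y ∈ Set.range x | eval y.rep F = 0}.ncard ≤ 9)
    {C : MvPolynomial (Fin 3) ℂ} (hC0 : C ≠ 0) (hCh : C.IsHomogeneous 2)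
    (hCv : ∀ i : Fin 12, (i : ℕ) < 7 → eval (x i).rep C = 0)
    {L : MvPolynomial (Fin 3) ℂ} (hL0 : L ≠ 0) (hL1 : L.IsHomogeneous 1) :
    #{i : Fin 12 | 7 ≤ (i : ℕ) ∧ eval (x i).rep L = 0} ≤ 2 := by
  set S : Finset (Fin 12) := {i | (i : ℕ) < 7}
  set T : Finset (Fin 12) := {i | 7 ≤ (i : ℕ) ∧ eval (x i).rep L = 0}
  have hdisj : Disjoint S T := disjoint_filter.mpr fun _ _ hlt hT => by omega
  have hCL : ∀ i ∈ S ∪ T, eval (x i).rep (C * L) = 0 := by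
    intro i hi
    rcases mem_union.mp hi with hi | hi
    · simp [hCv i (mem_filter.mp hi).2]
    · simp [(mem_filter.mp hi).2.2]
  have h10 := card_le_ncard_sep_range hx (Z := fun y => eval y.rep (C * L) = 0) hCL
  have h9 := hcubic (C * L) (mul_ne_zero hC0 hL0) (hCh.mul hL1)
  have h7 : #S = 7 := rfl
  rw [card_union_of_disjoint hdisj, h7] at h10
  omega

theorem conic_through_remaining_five_points_is_irreducible
    (x : Fin 12 → Projectivization ℂ (Fin 3 → ℂ)) (hx : Function.Injective x)
    (hcubic : ∀ F : MvPolynomial (Fin 3) ℂ, F ≠ 0 → F.IsHomogeneous 3 →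
      {y ∈ Set.range x | eval y.rep F = 0}.ncard ≤ 9)
    (C : MvPolynomial (Fin 3) ℂ) (hCh : C.IsHomogeneous 2) (hCirr : Irreducible C)
    (hCv : ∀ i : Fin 12, eval (x i).rep C = 0 ↔ (i : ℕ) < 7)
    (D : MvPolynomial (Fin 3) ℂ) (hD : D ≠ 0) (hDh : D.IsHomogeneous 2)
    (hDv : ∀ i : Fin 12, 7 ≤ (i : ℕ) → eval (x i).rep D = 0) :
    Irreducible D := by
  by_contra hirr
  obtain ⟨a, b, rfl, ha0, hb0, ha, hb⟩ := exists_linear_factors_of_not_irreducible hD hDh hirr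
  have hline {L : MvPolynomial (Fin 3) ℂ} (hL0 : L ≠ 0) (hL1 : L.IsHomogeneous 1) :=
    card_vanishing_on_last_five_le_two hx hcubic hCirr.ne_zero hCh (fun i => (hCv i).mpr) hL0 hL1
  set A : Finset (Fin 12) := {i | 7 ≤ (i : ℕ) ∧ eval (x i).rep a = 0}
  set B : Finset (Fin 12) := {i | 7 ≤ (i : ℕ) ∧ eval (x i).rep b = 0}
  have hsplit : ({i | 7 ≤ (i : ℕ)} : Finset (Fin 12)) ⊆ A ∪ B := by
    intro i hi
    have h7 := (mem_filter.mp hi).2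
    simpa [A, B, h7, mul_eq_zero] using hDv i h7
  have h5 : #{i : Fin 12 | 7 ≤ (i : ℕ)} = 5 := rfl
  have hcover := (card_le_card hsplit).trans (card_union_le _ _)
  have hA : #A ≤ 2 := hline ha0 ha
  have hB : #B ≤ 2 := hline hb0 hb
  omega
end

section
/- Let S be a set of 12 distinct points of P² such that: no line contains 5 or more points of S; no conic (irreducible or reducible) contains 8 or more points of S; and no (possibly reducible) cubic curve contains 10 or more points of S. Then there are at most 5 distinct lines in P² each of which contains at least 4 points of S. -/
open MvPolynomial
open scoped LinearAlgebra.Projectivization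

/-!
Suppose six lines each carry at least four, hence exactly four, points of `S`. Any two of them
meet in a point of `S`, since otherwise the conic formed by the pair would contain eight points.
No three of them pass through a common point of `S`, since otherwise the cubic formed by the
triple would contain `4 + 3 + 3 = 10` points. So the other five lines meet a fixed one in five
distinct points of `S`, but that line carries only four.
-/

theorem MvPolynomial.IsHomogeneous.exists_eq_sum_smul_X {R σ : Type*} [CommSemiring R]
    [Fintype σ] {l : MvPolynomial σ R} (hl : l.IsHomogeneous 1) :
    ∃ c : σ → R, ∑ i, c i • X i = l := by
  rw [← mem_homogeneousSubmodule, homogeneousSubmodule_one_eq_span_X] at hl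
  exact (Submodule.mem_span_range_iff_exists_fun R).mp hl

theorem MvPolynomial.IsHomogeneous.exists_dual_eval_eq {K σ : Type*} [Field K] [Fintype σ]
    {l : MvPolynomial σ K} (hl : l.IsHomogeneous 1) (hl0 : l ≠ 0) :
    ∃ f : Module.Dual K (σ → K), f ≠ 0 ∧ ∀ v, eval v l = f v := by
  obtain ⟨c, rfl⟩ := hl.exists_eq_sum_smul_X
  refine ⟨Fintype.linearCombination K c, fun hf => hl0 ?_, fun v => ?_⟩
  · classical
    have hc : c = 0 := _root_.funext fun i => by
      simpa using LinearMap.congr_fun hf (Pi.single i 1)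
    simp [hc]
  · simp [Fintype.linearCombination_apply, mul_comm]

section
variable {K σ : Type*} [Field K]

/-- Only meaningful for homogeneous `F`, where it does not depend on the chosen representatives. -/
def projZeroLocus (F : MvPolynomial σ K) : Set (ℙ K (σ → K)) := {y | eval y.rep F = 0}

theorem projZeroLocus_mul (F G : MvPolynomial σ K) :
    projZeroLocus (F * G) = projZeroLocus F ∪ projZeroLocus G := by
  ext y
  simp [projZeroLocus]

theorem projZeroLocus_inter_subsingleton [Fintype σ] (hσ : Fintype.card σ = 3)
    {l l' : MvPolynomial σ K} (hl : l.IsHomogeneous 1) (hl' : l'.IsHomogeneous 1)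
    (hl0 : l ≠ 0) (hl0' : l' ≠ 0) (hne : projZeroLocus l ≠ projZeroLocus l') :
    (projZeroLocus l ∩ projZeroLocus l').Subsingleton := by
  obtain ⟨f, hf0, hf⟩ := hl.exists_dual_eval_eq hl0
  obtain ⟨g, hg0, hg⟩ := hl'.exists_dual_eval_eq hl0'
  have finrank_ker {φ : Module.Dual K (σ → K)} (hφ : φ ≠ 0) :
      Module.finrank K (LinearMap.ker φ) = 2 := by
    have := Module.Dual.finrank_ker_add_one_of_ne_zero hφ
    simp [hσ] at this
    omega
  have mem_iff (h : Module.Dual K (σ → K)) (x : ℙ K (σ → K)) :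
      x ∈ (LinearMap.ker h).projectivization ↔ h x.rep = 0 := by
    conv_lhs => rw [← x.mk_rep]
    exact Submodule.mk_mem_projectivization_iff _ _
  rintro x ⟨hxl, hxl'⟩ y ⟨hyl, hyl'⟩
  by_contra hxy
  have hker := Projectivization.line_unique hxy _ _ (finrank_ker hf0) (finrank_ker hg0)
    ((mem_iff f x).2 ((hf _).symm.trans hxl)) ((mem_iff f y).2 ((hf _).symm.trans hyl))
    ((mem_iff g x).2 ((hg _).symm.trans hxl')) ((mem_iff g y).2 ((hg _).symm.trans hyl'))
  refine hne (Set.ext fun z => ?_)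
  simp only [projZeroLocus, Set.mem_ofPred_eq, hf, hg, ← LinearMap.mem_ker, hker]
end

theorem Set.encard_le_encard_add_one_of_pairwise_meet {ι α : Type*} {𝓛 : Set ι}
    {T : ι → Set α} (hmeet : 𝓛.Pairwise fun i j => (T i ∩ T j).Nonempty)
    (hconc : ∀ i ∈ 𝓛, ∀ j ∈ 𝓛, ∀ k ∈ 𝓛, i ≠ j → i ≠ k → j ≠ k → T i ∩ T j ∩ T k = ∅)
    {i₀ : ι} (hi₀ : i₀ ∈ 𝓛) : 𝓛.encard ≤ (T i₀).encard + 1 := by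
  have hpt : ∀ j ∈ 𝓛 \ {i₀}, ∃ x, x ∈ T i₀ ∩ T j :=
    fun j hj => hmeet hi₀ hj.1 (Ne.symm hj.2)
  rw [← Set.encard_sdiff_singleton_add_one hi₀]
  obtain hrest | ⟨j₁, hj₁⟩ := (𝓛 \ {i₀}).eq_empty_or_nonempty
  · simp [hrest]
  have : Nonempty α := ⟨(hpt j₁ hj₁).choose⟩
  choose! f hf using hpt
  gcongr
  refine Set.encard_le_encard_of_injOn (fun j hj => (hf j hj).1) fun j hj j' hj' hjj' => ?_
  by_contra hne
  have hempty := hconc i₀ hi₀ j hj.1 j' hj'.1 (Ne.symm hj.2) (Ne.symm hj'.2) hne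
  exact hempty.subset ⟨hf j hj, hjj' ▸ (hf j' hj').2⟩

theorem Set.inter_nonempty_of_ncard_union_lt {α : Type*} {A B : Set α} (hA : A.Finite)
    (hB : B.Finite) (h : (A ∪ B).ncard < A.ncard + B.ncard) : (A ∩ B).Nonempty := by
  by_contra hAB
  rw [Set.not_nonempty_iff_eq_empty, ← Set.disjoint_iff_inter_eq_empty] at hAB
  exact h.ne (Set.ncard_union_eq hAB hA hB)

theorem Set.ncard_union_union_add_two {α : Type*} {A B C : Set α} (hA : A.Finite)
    (hB : B.Finite) (hC : C.Finite) {p : α} (hp : p ∈ A ∩ B ∩ C)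
    (hAB : (A ∩ B).Subsingleton) (hAC : (A ∩ C).Subsingleton) (hBC : (B ∩ C).Subsingleton) :
    (A ∪ B ∪ C).ncard + 2 = A.ncard + B.ncard + C.ncard := by
  have hAB' : A ∩ B = {p} := hAB.eq_singleton_of_mem hp.1
  have hABC : (A ∪ B) ∩ C = {p} := by
    rw [Set.union_inter_distrib_right]
    exact (hAC.eq_singleton_of_mem ⟨hp.1.1, hp.2⟩).symm ▸
      (hBC.eq_singleton_of_mem ⟨hp.1.2, hp.2⟩).symm ▸ Set.union_self _
  have h2 := Set.ncard_union_add_ncard_inter A B hA hB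
  have h3 := Set.ncard_union_add_ncard_inter (A ∪ B) C (hA.union hB) hC
  rw [hAB', Set.ncard_singleton] at h2
  rw [hABC, Set.ncard_singleton] at h3
  omega

theorem encard_le_add_one_of_ncard_union_lt {α : Type*} {S : Set α} (hS : S.Finite)
    {𝓛 : Set (Set α)} {k : ℕ} (hk : ∀ Z ∈ 𝓛, (S ∩ Z).ncard = k)
    (hsub : 𝓛.Pairwise fun Z Z' => (Z ∩ Z').Subsingleton)
    (hpair : 𝓛.Pairwise fun Z Z' => (S ∩ (Z ∪ Z')).ncard < 2 * k)
    (htriple : ∀ Z ∈ 𝓛, ∀ Z' ∈ 𝓛, ∀ Z'' ∈ 𝓛, Z ≠ Z' → Z ≠ Z'' → Z' ≠ Z'' →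
      (S ∩ (Z ∪ Z' ∪ Z'')).ncard + 2 < 3 * k) :
    𝓛.encard ≤ k + 1 := by
  obtain rfl | ⟨Z₀, hZ₀⟩ := 𝓛.eq_empty_or_nonempty
  · simp
  have hfin (Z : Set α) : (S ∩ Z).Finite := hS.inter_of_left Z
  have hsubS {Z Z'} (hZ : Z ∈ 𝓛) (hZ' : Z' ∈ 𝓛) (hne : Z ≠ Z') :
      (S ∩ Z ∩ (S ∩ Z')).Subsingleton :=
    (hsub hZ hZ' hne).anti (Set.inter_subset_inter Set.inter_subset_right Set.inter_subset_right)
  have hmeet : 𝓛.Pairwise fun Z Z' => (S ∩ Z ∩ (S ∩ Z')).Nonempty := by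
    intro Z hZ Z' hZ' hne
    refine Set.inter_nonempty_of_ncard_union_lt (hfin Z) (hfin Z') ?_
    rw [← Set.inter_union_distrib_left, hk Z hZ, hk Z' hZ']
    linarith [hpair hZ hZ' hne]
  have hconc : ∀ Z ∈ 𝓛, ∀ Z' ∈ 𝓛, ∀ Z'' ∈ 𝓛, Z ≠ Z' → Z ≠ Z'' → Z' ≠ Z'' →
      S ∩ Z ∩ (S ∩ Z') ∩ (S ∩ Z'') = ∅ := by
    intro Z hZ Z' hZ' Z'' hZ'' h₁ h₂ h₃
    refine Set.eq_empty_of_forall_notMem fun p hp => ?_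
    have := Set.ncard_union_union_add_two (hfin Z) (hfin Z') (hfin Z'') hp
      (hsubS hZ hZ' h₁) (hsubS hZ hZ'' h₂) (hsubS hZ' hZ'' h₃)
    rw [← Set.inter_union_distrib_left, ← Set.inter_union_distrib_left, hk Z hZ, hk Z' hZ',
      hk Z'' hZ''] at this
    linarith [htriple Z hZ Z' hZ' Z'' hZ'' h₁ h₂ h₃]
  calc 𝓛.encard ≤ (S ∩ Z₀).encard + 1 :=
        Set.encard_le_encard_add_one_of_pairwise_meet hmeet hconc hZ₀
    _ = k + 1 := by rw [(hfin Z₀).cast_ncard_eq.symm, hk Z₀ hZ₀]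

theorem at_most_five_lines_with_four_points_general
    (S : Finset (Projectivization ℂ (Fin 3 → ℂ)))
    (hline : ∀ l : MvPolynomial (Fin 3) ℂ, l ≠ 0 → l.IsHomogeneous 1 →
      {x ∈ (S : Set (Projectivization ℂ (Fin 3 → ℂ))) | eval x.rep l = 0}.ncard ≤ 4)
    (hconic : ∀ c : MvPolynomial (Fin 3) ℂ, c ≠ 0 → c.IsHomogeneous 2 →
      {x ∈ (S : Set (Projectivization ℂ (Fin 3 → ℂ))) | eval x.rep c = 0}.ncard ≤ 7)
    (hcubic : ∀ F : MvPolynomial (Fin 3) ℂ, F ≠ 0 → F.IsHomogeneous 3 →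
      {x ∈ (S : Set (Projectivization ℂ (Fin 3 → ℂ))) | eval x.rep F = 0}.ncard ≤ 9) :
    {Z : Set (Projectivization ℂ (Fin 3 → ℂ)) |
      (∃ l : MvPolynomial (Fin 3) ℂ, l ≠ 0 ∧ l.IsHomogeneous 1 ∧
        Z = {y : Projectivization ℂ (Fin 3 → ℂ) | eval y.rep l = 0}) ∧
      4 ≤ {y ∈ (S : Set (Projectivization ℂ (Fin 3 → ℂ))) | y ∈ Z}.ncard}.encard ≤ 5 := by
  change {Z | (∃ l : MvPolynomial (Fin 3) ℂ, l ≠ 0 ∧ l.IsHomogeneous 1 ∧ Z = projZeroLocus l) ∧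
    4 ≤ ((S : Set (ℙ ℂ (Fin 3 → ℂ))) ∩ Z).ncard}.encard ≤ 5
  refine encard_le_add_one_of_ncard_union_lt (k := 4) S.finite_toSet ?_ ?_ ?_ ?_
  · rintro _ ⟨⟨l, hl0, hl, rfl⟩, h4⟩
    exact le_antisymm (hline l hl0 hl) h4
  · rintro _ ⟨⟨l, hl0, hl, rfl⟩, -⟩ _ ⟨⟨l', hl0', hl', rfl⟩, -⟩ hne
    exact projZeroLocus_inter_subsingleton (by simp) hl hl' hl0 hl0' hne
  · rintro _ ⟨⟨l, hl0, hl, rfl⟩, -⟩ _ ⟨⟨l', hl0', hl', rfl⟩, -⟩ -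
    rw [← projZeroLocus_mul]
    exact (hconic _ (mul_ne_zero hl0 hl0') (hl.mul hl')).trans_lt (by norm_num)
  · rintro _ ⟨⟨l, hl0, hl, rfl⟩, -⟩ _ ⟨⟨l', hl0', hl', rfl⟩, -⟩ _ ⟨⟨l'', hl0'', hl'', rfl⟩, -⟩ - - -
    have : (↑S ∩ projZeroLocus (l * l' * l'')).ncard ≤ 9 :=
      hcubic _ (mul_ne_zero (mul_ne_zero hl0 hl0') hl0'') ((hl.mul hl').mul hl'')
    rw [projZeroLocus_mul, projZeroLocus_mul] at this
    omega

theorem at_most_five_lines_with_four_points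
    (S : Finset (Projectivization ℂ (Fin 3 → ℂ))) (hS : S.card = 12)
    (hline : ∀ l : MvPolynomial (Fin 3) ℂ, l ≠ 0 → l.IsHomogeneous 1 →
      {x ∈ (S : Set (Projectivization ℂ (Fin 3 → ℂ))) | eval x.rep l = 0}.ncard ≤ 4)
    (hconic : ∀ c : MvPolynomial (Fin 3) ℂ, c ≠ 0 → c.IsHomogeneous 2 →
      {x ∈ (S : Set (Projectivization ℂ (Fin 3 → ℂ))) | eval x.rep c = 0}.ncard ≤ 7)
    (hcubic : ∀ F : MvPolynomial (Fin 3) ℂ, F ≠ 0 → F.IsHomogeneous 3 →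
      {x ∈ (S : Set (Projectivization ℂ (Fin 3 → ℂ))) | eval x.rep F = 0}.ncard ≤ 9) :
    {Z : Set (Projectivization ℂ (Fin 3 → ℂ)) |
      (∃ l : MvPolynomial (Fin 3) ℂ, l ≠ 0 ∧ l.IsHomogeneous 1 ∧
        Z = {y : Projectivization ℂ (Fin 3 → ℂ) | eval y.rep l = 0}) ∧
      4 ≤ {y ∈ (S : Set (Projectivization ℂ (Fin 3 → ℂ))) | y ∈ Z}.ncard}.encard ≤ 5 :=
  at_most_five_lines_with_four_points_general S hline hconic hcubic
end
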